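/- Let G(y) = √(1 + y²) − 1. Then for every y ∈ ℝ one has G'(y)² − 2G(y)G''(y) = (√(1+y²) − 1)²·(√(1+y²) + 2)/(1+y²)^{3/2}; in particular G'(y)² − 2G(y)G''(y) ≥ 0 for all y ∈ ℝ, with equality if and only if y = 0. Consequently, for F(x) = x²/2 and this G, the function M(x,y) = (6F(x)F''(x)² − 3F'(x)²F''(x) − 2F(x)F'(x)F'''(x))·G(y)G'(y)² + F(x)F'(x)²F''(x)·(G'(y)² − 2G(y)G''(y)) satisfies M(x,y) = (x⁴/2)·(G'(y)² − 2G(y)G''(y)) ≥ 0 for all (x,y) ∈ ℝ². -/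

import Mathlib

/-- `G(y) = √(1 + y²) − 1`, the normalized relativistic kinetic energy. -/
noncomputable def Grel : ℝ → ℝ := fun y => Real.sqrt (1 + y ^ 2) - 1

/-- `F(x) = x²/2`. -/
noncomputable def Frel : ℝ → ℝ := fun x => x ^ 2 / 2

/-- The function `M(x,y)` built from `F` and `G`. -/
noncomputable def Mfun (F G : ℝ → ℝ) (x y : ℝ) : ℝ :=
  (6 * F x * (deriv (deriv F) x) ^ 2 - 3 * (deriv F x) ^ 2 * deriv (deriv F) x
      - 2 * F x * deriv F x * deriv (deriv (deriv F)) x) * G y * (deriv G y) ^ 2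
    + F x * (deriv F x) ^ 2 * deriv (deriv F) x
      * ((deriv G y) ^ 2 - 2 * G y * deriv (deriv G) y)


/-! For `s = √(1 + y²)` one has `G' = y / s` and `G'' = 1 / s³`, and substituting `y² = s² − 1`
turns the defect `G'² − 2 G G''` into `(s − 1)² (s + 2) / s³`, which is nonnegative since `s ≥ 1` and vanishes
only at `s = 1`. Since `F' = x`, `F'' = 1`, `F''' = 0`, the first summand of `M` is
`(6 F − 3 x²) G G'² = 0`, and the second is `(x⁴ / 2)(G'² − 2 G G'')`. -/

open Real

lemma one_le_sqrt_one_add_sq (y : ℝ) : 1 ≤ √(1 + y ^ 2) :=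
  one_le_sqrt.mpr (by nlinarith [sq_nonneg y])

lemma hasDerivAt_sqrt_one_add_sq (y : ℝ) :
    HasDerivAt (fun y : ℝ => √(1 + y ^ 2)) (y / √(1 + y ^ 2)) y := by
  have hinner : HasDerivAt (fun y : ℝ => 1 + y ^ 2) (2 * y) y := by
    simpa using (hasDerivAt_pow 2 y).const_add 1
  refine ((hasDerivAt_sqrt (by positivity)).comp y hinner).congr_deriv ?_
  ring

lemma deriv_Grel : deriv Grel = fun y => y / √(1 + y ^ 2) :=
  funext fun y => ((hasDerivAt_sqrt_one_add_sq y).sub_const 1).deriv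

lemma deriv_deriv_Grel (y : ℝ) : deriv (deriv Grel) y = 1 / √(1 + y ^ 2) ^ 3 := by
  have hs : √(1 + y ^ 2) ≠ 0 := by positivity
  have hquot : HasDerivAt (fun y => y / √(1 + y ^ 2))
      ((1 * √(1 + y ^ 2) - y * (y / √(1 + y ^ 2))) / √(1 + y ^ 2) ^ 2) y :=
    (hasDerivAt_id y).div (hasDerivAt_sqrt_one_add_sq y) hs
  rw [deriv_Grel, hquot.deriv]
  field_simp
  rw [sq_sqrt (by positivity)]
  ring

lemma Grel_defect_eq (y : ℝ) :
    deriv Grel y ^ 2 - 2 * Grel y * deriv (deriv Grel) y =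
      (√(1 + y ^ 2) - 1) ^ 2 * (√(1 + y ^ 2) + 2) / √(1 + y ^ 2) ^ 3 := by
  rw [deriv_deriv_Grel, deriv_Grel, Grel]
  beta_reduce
  have hy : y ^ 2 = √(1 + y ^ 2) ^ 2 - 1 := by rw [sq_sqrt (by positivity)]; ring
  have hs : √(1 + y ^ 2) ≠ 0 := by positivity
  set s := √(1 + y ^ 2)
  clear_value s
  field_simp
  rw [hy]
  ring

lemma sqrt_pow_three {x : ℝ} (hx : 0 ≤ x) : √x ^ 3 = x ^ ((3 : ℝ) / 2) := by
  rw [sqrt_eq_rpow, ← rpow_natCast, ← rpow_mul hx]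
  norm_num

lemma Grel_defect_nonneg (y : ℝ) :
    0 ≤ deriv Grel y ^ 2 - 2 * Grel y * deriv (deriv Grel) y := by
  rw [Grel_defect_eq]
  have := one_le_sqrt_one_add_sq y
  positivity

lemma Grel_defect_eq_zero_iff (y : ℝ) :
    deriv Grel y ^ 2 - 2 * Grel y * deriv (deriv Grel) y = 0 ↔ y = 0 := by
  have hcube : √(1 + y ^ 2) ^ 3 ≠ 0 := by positivity
  have hsum : √(1 + y ^ 2) + 2 ≠ 0 := by positivity
  rw [Grel_defect_eq, div_eq_zero_iff, or_iff_left hcube, mul_eq_zero, or_iff_left hsum,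
    pow_eq_zero_iff two_ne_zero, sub_eq_zero, sqrt_eq_one, add_eq_left, pow_eq_zero_iff two_ne_zero]

lemma deriv_Frel : deriv Frel = id := by
  funext x
  have : HasDerivAt (fun x : ℝ => x ^ 2 / 2) x x := by
    simpa using (hasDerivAt_pow 2 x).div_const 2
  exact this.deriv

lemma Mfun_Frel (G : ℝ → ℝ) (x y : ℝ) :
    Mfun Frel G x y = x ^ 4 / 2 * (deriv G y ^ 2 - 2 * G y * deriv (deriv G) y) := by
  simp only [Mfun, deriv_Frel, deriv_id, deriv_id', deriv_const', Frel, id]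
  ring

theorem stmt13 :
    (∀ y : ℝ,
      (deriv Grel y) ^ 2 - 2 * Grel y * deriv (deriv Grel) y =
        (Real.sqrt (1 + y ^ 2) - 1) ^ 2 * (Real.sqrt (1 + y ^ 2) + 2)
          / (1 + y ^ 2) ^ ((3 : ℝ) / 2)) ∧
    (∀ y : ℝ, 0 ≤ (deriv Grel y) ^ 2 - 2 * Grel y * deriv (deriv Grel) y) ∧
    (∀ y : ℝ, (deriv Grel y) ^ 2 - 2 * Grel y * deriv (deriv Grel) y = 0 ↔ y = 0) ∧
    (∀ x y : ℝ,
      Mfun Frel Grel x y = x ^ 4 / 2 * ((deriv Grel y) ^ 2 - 2 * Grel y * deriv (deriv Grel) y)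
        ∧ 0 ≤ Mfun Frel Grel x y) := by
  refine ⟨fun y => ?_, Grel_defect_nonneg, Grel_defect_eq_zero_iff,
    fun x y => ⟨Mfun_Frel Grel x y, ?_⟩⟩
  · rw [Grel_defect_eq, sqrt_pow_three (by positivity)]
  · rw [Mfun_Frel]
    have := Grel_defect_nonneg y
    positivity
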